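/- arXiv:1311.5736 — 7 statements merged into one kernel-verified Lean document; each statement's English description precedes it below -/
import Mathlib

section
/- Let f : [a,b] → ℝ be a function whose (n-1)-st derivative (n ≥ 1) is absolutely continuous on [a,b]. Then for any x ∈ [a,b], ∫_a^b f(t) dt = Σ_{k=0}^{n-1} (1/(k+1)!)[(x-a)^{k+1} f^{(k)}(a) + (-1)^k (b-x)^{k+1} f^{(k)}(b)] + (1/n!) ∫_a^b (x-t)^n f^{(n)}(t) dt. -/
/-!
Integrating by parts against `(x - t) ^ k / k!`, whose derivative in `t` is
`-(x - t) ^ (k - 1) / (k - 1)!`, moves one derivative from the kernel onto `f` and produces the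
boundary terms at `a` and `b`; `n` such steps, starting from `∫ f = ∫ (x - t) ^ 0 f⁽⁰⁾(t) dt`,
give the formula.
-/

open MeasureTheory Set

theorem ContDiff.hasDerivAt_iteratedDeriv {𝕜 F : Type*} [NontriviallyNormedField 𝕜]
    [NormedAddCommGroup F] [NormedSpace 𝕜 F] {f : 𝕜 → F} {n : WithTop ℕ∞} {k : ℕ}
    (hf : ContDiff 𝕜 n f) (hk : k < n) (t : 𝕜) :
    HasDerivAt (iteratedDeriv k f) (iteratedDeriv (k + 1) f t) t := by
  rw [iteratedDeriv_succ]
  exact ((hf.differentiable_iteratedDeriv k hk) t).hasDerivAt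

theorem integral_pow_mul_eq_of_hasDerivAt {g g' : ℝ → ℝ} {a b : ℝ} (x : ℝ) (m : ℕ)
    (hg : ∀ t ∈ uIcc a b, HasDerivAt g (g' t) t) (hg' : IntervalIntegrable g' volume a b) :
    (m + 1) * ∫ t in a..b, (x - t) ^ m * g t =
      (x - a) ^ (m + 1) * g a - (x - b) ^ (m + 1) * g b +
        ∫ t in a..b, (x - t) ^ (m + 1) * g' t := by
  have hpow : ∀ t ∈ uIcc a b,
      HasDerivAt (fun t => (x - t) ^ (m + 1)) (-((m + 1) * (x - t) ^ m)) t := fun t _ =>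
    (((hasDerivAt_id' t).const_sub x).fun_pow (m + 1)).congr_deriv (by push_cast; ring)
  have hibp := intervalIntegral.integral_mul_deriv_eq_deriv_mul hg hpow hg'
    (Continuous.intervalIntegrable (by fun_prop) a b)
  have hrearrange : ∀ t, g t * -((m + 1) * (x - t) ^ m) = -((m + 1) * ((x - t) ^ m * g t)) :=
    fun t => by ring
  simp only [hrearrange, mul_comm (g' _), intervalIntegral.integral_neg,
    intervalIntegral.integral_const_mul] at hibp
  linarith

theorem integral_eq_sum_add_integral_pow_mul {g : ℕ → ℝ → ℝ} {a b : ℝ} (x : ℝ) (n : ℕ)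
    (hg : ∀ k < n, ∀ t ∈ uIcc a b, HasDerivAt (g k) (g (k + 1) t) t)
    (hint : ∀ k < n, IntervalIntegrable (g (k + 1)) volume a b) :
    ∫ t in a..b, g 0 t =
      (∑ k ∈ Finset.range n, (1 / ((k + 1).factorial : ℝ)) *
        ((x - a) ^ (k + 1) * g k a + (-1 : ℝ) ^ k * (b - x) ^ (k + 1) * g k b)) +
      (1 / (n.factorial : ℝ)) * ∫ t in a..b, (x - t) ^ n * g n t := by
  induction n with
  | zero => simp
  | succ m ih =>
    have hstep := integral_pow_mul_eq_of_hasDerivAt x m (hg m m.lt_succ_self)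
      (hint m m.lt_succ_self)
    have hsign : (x - b) ^ (m + 1) = -((-1 : ℝ) ^ m * (b - x) ^ (m + 1)) := by
      rw [← neg_sub, neg_pow, pow_succ (-1 : ℝ)]
      ring
    have hfac : ((m + 1).factorial : ℝ) = (m + 1) * m.factorial := by
      push_cast [Nat.factorial_succ]
      ring
    rw [hsign] at hstep
    rw [ih (fun k hk => hg k (hk.trans m.lt_succ_self))
      (fun k hk => hint k (hk.trans m.lt_succ_self)), Finset.sum_range_succ, hfac]
    field_simp
    linear_combination hstep

theorem stmt_0_general (f : ℝ → ℝ) (a b : ℝ) (hab : a < b) (n : ℕ)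
    (hf : ContDiff ℝ ((n - 1 : ℕ) : ℕ∞) f)
    (hf' : ∀ t ∈ Set.Icc a b,
      HasDerivAt (iteratedDeriv (n - 1) f) (iteratedDeriv n f t) t)
    (hint : IntervalIntegrable (iteratedDeriv n f) volume a b)
    (x : ℝ) :
    ∫ t in a..b, f t =
      (∑ k ∈ Finset.range n, (1 / (Nat.factorial (k + 1) : ℝ)) *
        ((x - a) ^ (k + 1) * iteratedDeriv k f a +
          (-1 : ℝ) ^ k * (b - x) ^ (k + 1) * iteratedDeriv k f b)) +
      (1 / (Nat.factorial n : ℝ)) * ∫ t in a..b, (x - t) ^ n * iteratedDeriv n f t := by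
  have hderiv : ∀ k < n, ∀ t ∈ uIcc a b,
      HasDerivAt (iteratedDeriv k f) (iteratedDeriv (k + 1) f t) t := by
    intro k hk t ht
    obtain rfl | hlt : k + 1 = n ∨ k + 1 < n := by omega
    · exact hf' t (uIcc_of_le hab.le ▸ ht)
    · exact hf.hasDerivAt_iteratedDeriv (by exact_mod_cast (by omega : k < n - 1)) t
  have hint' : ∀ k < n, IntervalIntegrable (iteratedDeriv (k + 1) f) volume a b := by
    intro k hk
    obtain rfl | hlt : k + 1 = n ∨ k + 1 < n := by omega
    · exact hint
    · exact (hf.continuous_iteratedDeriv (k + 1)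
        (by exact_mod_cast (by omega : k + 1 ≤ n - 1))).intervalIntegrable a b
  simpa only [iteratedDeriv_zero] using
    integral_eq_sum_add_integral_pow_mul (g := fun k => iteratedDeriv k f) x n hderiv hint'

theorem stmt_0 (f : ℝ → ℝ) (a b : ℝ) (hab : a < b) (n : ℕ) (hn : 1 ≤ n)
    (hf : ContDiff ℝ ((n - 1 : ℕ) : ℕ∞) f)
    (hf' : ∀ t ∈ Set.Icc a b,
      HasDerivAt (iteratedDeriv (n - 1) f) (iteratedDeriv n f t) t)
    (hint : IntervalIntegrable (iteratedDeriv n f) volume a b)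
    (x : ℝ) (hx : x ∈ Set.Icc a b) :
    ∫ t in a..b, f t =
      (∑ k ∈ Finset.range n, (1 / (Nat.factorial (k + 1) : ℝ)) *
        ((x - a) ^ (k + 1) * iteratedDeriv k f a +
          (-1 : ℝ) ^ k * (b - x) ^ (k + 1) * iteratedDeriv k f b)) +
      (1 / (Nat.factorial n : ℝ)) * ∫ t in a..b, (x - t) ^ n * iteratedDeriv n f t :=
  stmt_0_general f a b hab n hf hf' hint x
end

section
/- Let f : [a,b] → ℝ be such that f^{(n-1)} (n ≥ 1) is absolutely continuous on [a,b] and |f^{(n)}| is quasi-convex on [a,b]. Then for all x ∈ [a,b]: |∫_a^b f(t) dt - Σ_{k=0}^{n-1} (1/(k+1)!)[(x-a)^{k+1} f^{(k)}(a) + (-1)^k (b-x)^{k+1} f^{(k)}(b)]| ≤ (1/n!)·{max{|f^{(n)}(a)|, |f^{(n)}(x)|}·(x-a)^{n+1}/(n+1) + max{|f^{(n)}(x)|, |f^{(n)}(b)|}·(b-x)^{n+1}/(n+1)}. -/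
/-!
Expanding `∫ f` by Taylor's formula with integral remainder around `a` and around `b`, both
evaluated at `x`, writes the left-hand side as `(R a - R b) / n!` with
`R c = ∫ t in c..x, (x - t) ^ n * f⁽ⁿ⁾ t`. On the segment between `c ∈ {a, b}` and `x`,
quasi-convexity bounds `|f⁽ⁿ⁾|` by its larger value at the two ends, and
`∫ |x - t| ^ n = |x - c| ^ (n + 1) / (n + 1)` there.
-/

open MeasureTheory Set
open scoped Nat

theorem integral_sub_pow_mul_eq {u v : ℝ → ℝ} {c x : ℝ} (k : ℕ)
    (hu : ∀ t ∈ uIcc c x, HasDerivAt u (v t) t) (hv : IntervalIntegrable v volume c x) :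
    (k + 1) * ∫ t in c..x, (x - t) ^ k * u t =
      u c * (x - c) ^ (k + 1) + ∫ t in c..x, (x - t) ^ (k + 1) * v t := by
  have hw : ∀ t ∈ uIcc c x,
      HasDerivAt (fun t => -(x - t) ^ (k + 1)) ((k + 1) * (x - t) ^ k) t := fun t _ => by
    simpa using (((hasDerivAt_id t).const_sub x).fun_pow (k + 1)).fun_neg
  have hparts := intervalIntegral.integral_mul_deriv_eq_deriv_mul hu hw hv
    ((by fun_prop : Continuous fun t => ((k : ℝ) + 1) * (x - t) ^ k).intervalIntegrable _ _)
  simp only [sub_self, ne_eq, add_eq_zero, one_ne_zero, and_false, not_false_eq_true,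
    zero_pow, neg_zero, mul_zero, mul_neg, intervalIntegral.integral_neg, sub_neg_eq_add,
    zero_add] at hparts
  calc (k + 1) * ∫ t in c..x, (x - t) ^ k * u t
      = ∫ t in c..x, u t * ((k + 1) * (x - t) ^ k) := by
        rw [← intervalIntegral.integral_const_mul]
        congr 1 with t
        ring
    _ = _ := by simp_rw [hparts, mul_comm (v _)]

theorem integral_eq_sum_add_integral_sub_pow_mul (F : ℕ → ℝ → ℝ) {c x : ℝ} (n : ℕ)
    (hF : ∀ k < n, ∀ t ∈ uIcc c x, HasDerivAt (F k) (F (k + 1) t) t)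
    (hFn : IntervalIntegrable (F n) volume c x) :
    ∫ t in c..x, F 0 t = ∑ k ∈ Finset.range n, F k c * (x - c) ^ (k + 1) / (k + 1)! +
      (∫ t in c..x, (x - t) ^ n * F n t) / n ! := by
  induction n with
  | zero => simp
  | succ m ih =>
    have hFm : IntervalIntegrable (F m) volume c x :=
      ContinuousOn.intervalIntegrable fun t ht =>
        (hF m m.lt_succ_self t ht).continuousAt.continuousWithinAt
    have hstep := integral_sub_pow_mul_eq m (hF m m.lt_succ_self) hFn
    rw [ih (fun k hk => hF k (hk.trans m.lt_succ_self)) hFm, Finset.sum_range_succ,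
      Nat.factorial_succ]
    push_cast
    field_simp
    linear_combination hstep

theorem hasDerivAt_iteratedDeriv_of_contDiff {f : ℝ → ℝ} {s : Set ℝ} {n : ℕ}
    (hf : ContDiff ℝ ((n - 1 : ℕ) : ℕ∞) f)
    (hf' : ∀ t ∈ s, HasDerivAt (iteratedDeriv (n - 1) f) (iteratedDeriv n f t) t)
    {k : ℕ} (hk : k < n) {t : ℝ} (ht : t ∈ s) :
    HasDerivAt (iteratedDeriv k f) (iteratedDeriv (k + 1) f t) t := by
  rcases Nat.lt_or_ge (k + 1) n with hk' | hk'
  · rw [iteratedDeriv_succ]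
    exact (hf.differentiable_iteratedDeriv k (by exact_mod_cast (by omega : k < n - 1))
      t).hasDerivAt
  · obtain rfl : n = k + 1 := by omega
    simpa using hf' t ht

theorem QuasiconvexOn.le_max_of_mem_uIcc {𝕜 β : Type*} [Field 𝕜] [LinearOrder 𝕜]
    [IsStrictOrderedRing 𝕜] [LinearOrder β] {s : Set 𝕜} {g : 𝕜 → β}
    (hg : QuasiconvexOn 𝕜 s g) {u v t : 𝕜} (hu : u ∈ s) (hv : v ∈ s) (ht : t ∈ uIcc u v) :
    g t ≤ max (g u) (g v) :=
  ((hg _).segment_subset ⟨hu, le_max_left _ _⟩ ⟨hv, le_max_right _ _⟩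
    (segment_eq_uIcc u v ▸ ht)).2

theorem abs_integral_sub_pow_mul_le {D : ℝ → ℝ} {c x M : ℝ} (n : ℕ)
    (hD : ∀ t ∈ uIcc c x, |D t| ≤ M) (hint : IntervalIntegrable D volume c x) :
    |∫ t in c..x, (x - t) ^ n * D t| ≤ M * (|x - c| ^ (n + 1) / (n + 1)) := by
  have hint' : IntervalIntegrable (fun t => |(x - t) ^ n * D t|) volume c x :=
    (hint.continuousOn_mul (by fun_prop)).abs
  have hpt : ∀ t ∈ uIcc c x, |(x - t) ^ n * D t| ≤ M * |x - t| ^ n := fun t ht => by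
    rw [abs_mul, abs_pow, mul_comm]
    exact mul_le_mul_of_nonneg_right (hD t ht) (by positivity)
  rcases le_total c x with h | h
  · calc |∫ t in c..x, (x - t) ^ n * D t|
        ≤ ∫ t in c..x, M * (x - t) ^ n := by
          refine (intervalIntegral.abs_integral_le_integral_abs h).trans
            (intervalIntegral.integral_mono_on h hint'
              (Continuous.intervalIntegrable (by fun_prop) _ _) fun t ht => ?_)
          simpa [abs_of_nonneg (sub_nonneg.2 ht.2)] using hpt t (Icc_subset_uIcc ht)
      _ = M * (|x - c| ^ (n + 1) / (n + 1)) := by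
          rw [abs_of_nonneg (sub_nonneg.2 h), intervalIntegral.integral_const_mul]
          simp [intervalIntegral.integral_comp_sub_left fun s => s ^ n]
  · rw [intervalIntegral.integral_symm, abs_neg]
    calc |∫ t in x..c, (x - t) ^ n * D t|
        ≤ ∫ t in x..c, M * (t - x) ^ n := by
          refine (intervalIntegral.abs_integral_le_integral_abs h).trans
            (intervalIntegral.integral_mono_on h hint'.symm
              (Continuous.intervalIntegrable (by fun_prop) _ _) fun t ht => ?_)
          simpa [abs_sub_comm x t, abs_of_nonneg (sub_nonneg.2 ht.1)] using
            hpt t (Icc_subset_uIcc' ht)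
      _ = M * (|x - c| ^ (n + 1) / (n + 1)) := by
          rw [abs_sub_comm, abs_of_nonneg (sub_nonneg.2 h), intervalIntegral.integral_const_mul]
          simp [intervalIntegral.integral_comp_sub_right fun s => s ^ n]

theorem integral_eq_taylor_add_remainder {f : ℝ → ℝ} {s : Set ℝ} {n : ℕ}
    (hf : ContDiff ℝ ((n - 1 : ℕ) : ℕ∞) f)
    (hf' : ∀ t ∈ s, HasDerivAt (iteratedDeriv (n - 1) f) (iteratedDeriv n f t) t)
    {c x : ℝ} (hs : uIcc c x ⊆ s) (hint : IntervalIntegrable (iteratedDeriv n f) volume c x) :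
    ∫ t in c..x, f t =
      ∑ k ∈ Finset.range n, iteratedDeriv k f c * (x - c) ^ (k + 1) / (k + 1)! +
        (∫ t in c..x, (x - t) ^ n * iteratedDeriv n f t) / n ! := by
  simpa using integral_eq_sum_add_integral_sub_pow_mul (fun k => iteratedDeriv k f) n
    (fun k hk t ht => hasDerivAt_iteratedDeriv_of_contDiff hf hf' hk (hs ht)) hint

theorem integral_sub_two_point_taylor_eq {f : ℝ → ℝ} {a b x : ℝ} {n : ℕ}
    (hf : ContDiff ℝ ((n - 1 : ℕ) : ℕ∞) f)
    (hf' : ∀ t ∈ Icc a b, HasDerivAt (iteratedDeriv (n - 1) f) (iteratedDeriv n f t) t)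
    (hint : IntervalIntegrable (iteratedDeriv n f) volume a b) (hx : x ∈ Icc a b) :
    (∫ t in a..b, f t) -
      ∑ k ∈ Finset.range n, (1 / ((k + 1)! : ℝ)) *
        ((x - a) ^ (k + 1) * iteratedDeriv k f a +
          (-1 : ℝ) ^ k * (b - x) ^ (k + 1) * iteratedDeriv k f b) =
    ((∫ t in a..x, (x - t) ^ n * iteratedDeriv n f t) -
      ∫ t in b..x, (x - t) ^ n * iteratedDeriv n f t) / n ! := by
  have ha : a ∈ Icc a b := ⟨le_rfl, hx.1.trans hx.2⟩
  have hb : b ∈ Icc a b := ⟨hx.1.trans hx.2, le_rfl⟩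
  have taylor := fun c (hc : c ∈ Icc a b) => integral_eq_taylor_add_remainder hf hf'
    (uIcc_subset_Icc hc hx)
    (hint.mono_set (by rw [uIcc_of_le ha.2]; exact uIcc_subset_Icc hc hx))
  have hsplit : ∫ t in a..b, f t = (∫ t in a..x, f t) - ∫ t in b..x, f t := by
    rw [← intervalIntegral.integral_add_adjacent_intervals (hf.continuous.intervalIntegrable a x)
      (hf.continuous.intervalIntegrable x b), intervalIntegral.integral_symm b x, sub_eq_add_neg]
  have hsum : ∑ k ∈ Finset.range n, (1 / ((k + 1)! : ℝ)) *
        ((x - a) ^ (k + 1) * iteratedDeriv k f a +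
          (-1 : ℝ) ^ k * (b - x) ^ (k + 1) * iteratedDeriv k f b) =
      ∑ k ∈ Finset.range n, iteratedDeriv k f a * (x - a) ^ (k + 1) / (k + 1)! -
        ∑ k ∈ Finset.range n, iteratedDeriv k f b * (x - b) ^ (k + 1) / (k + 1)! := by
    rw [← Finset.sum_sub_distrib]
    refine Finset.sum_congr rfl fun k _ => ?_
    rw [show x - b = -1 * (b - x) by ring, mul_pow, pow_succ]
    ring
  rw [hsplit, taylor a ha, taylor b hb, hsum]
  ring

theorem stmt_2_general (f : ℝ → ℝ) (a b : ℝ) (n : ℕ)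
    (hf : ContDiff ℝ ((n - 1 : ℕ) : ℕ∞) f)
    (hf' : ∀ t ∈ Set.Icc a b,
      HasDerivAt (iteratedDeriv (n - 1) f) (iteratedDeriv n f t) t)
    (hint : IntervalIntegrable (iteratedDeriv n f) volume a b)
    (hq : ∀ u ∈ Set.Icc a b, ∀ v ∈ Set.Icc a b, ∀ α ∈ Set.Icc (0 : ℝ) 1,
      |iteratedDeriv n f (α * u + (1 - α) * v)| ≤
        max |iteratedDeriv n f u| |iteratedDeriv n f v|)
    (x : ℝ) (hx : x ∈ Set.Icc a b) :
    |(∫ t in a..b, f t) -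
      ∑ k ∈ Finset.range n, (1 / (Nat.factorial (k + 1) : ℝ)) *
        ((x - a) ^ (k + 1) * iteratedDeriv k f a +
          (-1 : ℝ) ^ k * (b - x) ^ (k + 1) * iteratedDeriv k f b)| ≤
    (1 / (Nat.factorial n : ℝ)) *
      (max |iteratedDeriv n f a| |iteratedDeriv n f x| * ((x - a) ^ (n + 1) / (n + 1)) +
       max |iteratedDeriv n f x| |iteratedDeriv n f b| * ((b - x) ^ (n + 1) / (n + 1))) := by
  have ha : a ∈ Icc a b := ⟨le_rfl, hx.1.trans hx.2⟩
  have hb : b ∈ Icc a b := ⟨hx.1.trans hx.2, le_rfl⟩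
  have hDint : ∀ c ∈ Icc a b, IntervalIntegrable (iteratedDeriv n f) volume c x := fun c hc =>
    hint.mono_set (by rw [uIcc_of_le ha.2]; exact uIcc_subset_Icc hc hx)
  have hqc : QuasiconvexOn ℝ (Icc a b) fun t => |iteratedDeriv n f t| :=
    quasiconvexOn_iff_le_max.2 ⟨convex_Icc a b, fun u hu v hv α β hα _ hαβ => by
      obtain rfl : β = 1 - α := by linarith
      simpa using hq u hu v hv α ⟨hα, by linarith⟩⟩
  have hRa := abs_integral_sub_pow_mul_le n
    (fun t ht => hqc.le_max_of_mem_uIcc ha hx ht) (hDint a ha)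
  have hRb := abs_integral_sub_pow_mul_le n
    (fun t ht => hqc.le_max_of_mem_uIcc hx hb (uIcc_comm b x ▸ ht)) (hDint b hb)
  rw [abs_of_nonneg (sub_nonneg.2 hx.1)] at hRa
  rw [abs_sub_comm, abs_of_nonneg (sub_nonneg.2 hx.2)] at hRb
  rw [integral_sub_two_point_taylor_eq hf hf' hint hx, abs_div, Nat.abs_cast, one_div_mul_eq_div]
  gcongr
  exact (abs_sub _ _).trans (add_le_add hRa hRb)

theorem stmt_2 (f : ℝ → ℝ) (a b : ℝ) (hab : a < b) (n : ℕ) (hn : 1 ≤ n)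
    (hf : ContDiff ℝ ((n - 1 : ℕ) : ℕ∞) f)
    (hf' : ∀ t ∈ Set.Icc a b,
      HasDerivAt (iteratedDeriv (n - 1) f) (iteratedDeriv n f t) t)
    (hint : IntervalIntegrable (iteratedDeriv n f) volume a b)
    (hq : ∀ u ∈ Set.Icc a b, ∀ v ∈ Set.Icc a b, ∀ α ∈ Set.Icc (0 : ℝ) 1,
      |iteratedDeriv n f (α * u + (1 - α) * v)| ≤
        max |iteratedDeriv n f u| |iteratedDeriv n f v|)
    (x : ℝ) (hx : x ∈ Set.Icc a b) :
    |(∫ t in a..b, f t) -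
      ∑ k ∈ Finset.range n, (1 / (Nat.factorial (k + 1) : ℝ)) *
        ((x - a) ^ (k + 1) * iteratedDeriv k f a +
          (-1 : ℝ) ^ k * (b - x) ^ (k + 1) * iteratedDeriv k f b)| ≤
    (1 / (Nat.factorial n : ℝ)) *
      (max |iteratedDeriv n f a| |iteratedDeriv n f x| * ((x - a) ^ (n + 1) / (n + 1)) +
       max |iteratedDeriv n f x| |iteratedDeriv n f b| * ((b - x) ^ (n + 1) / (n + 1))) :=
  stmt_2_general f a b n hf hf' hint hq x hx
end

section
/- Let f : [a,b] → ℝ be such that f^{(n-1)} (n ≥ 1) is absolutely continuous on [a,b] and |f^{(n)}|^q is quasi-convex on [a,b], where p > 1 and 1/p + 1/q = 1. Then for all x ∈ [a,b]: |∫_a^b f(t) dt - Σ_{k=0}^{n-1} (1/(k+1)!)[(x-a)^{k+1} f^{(k)}(a) + (-1)^k (b-x)^{k+1} f^{(k)}(b)]| ≤ ((b-a)^{1/q}/n!)·(((x-a)^{np+1} + (b-x)^{np+1})/(np+1))^{1/p}·(max{|f^{(n)}(a)|^q, |f^{(n)}(b)|^q})^{1/q}. -/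
/-!
Integrating by parts `n` times against the kernels `(t - x) ^ (k + 1) / (k + 1)!` turns `∫ f` into
the sum on the left plus the remainder `(-1) ^ n / n! * ∫ (t - x) ^ n f⁽ⁿ⁾(t) dt`. Hölder's
inequality splits the remainder into the `Lᵖ` norm of `|t - x| ^ n`, which is computed exactly, and
the `L^q` norm of `f⁽ⁿ⁾`; by quasi-convexity `|f⁽ⁿ⁾| ^ q` is bounded on `[a, b]` by its larger
endpoint value, so that norm is at most `((b - a) * max …) ^ (1 / q)`.
-/

open MeasureTheory Set

theorem QuasiconvexOn.le_max_of_mem_segment {𝕜 E β : Type*} [Semiring 𝕜] [PartialOrder 𝕜]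
    [AddCommMonoid E] [SMul 𝕜 E] [LinearOrder β] {s : Set E} {f : E → β}
    (hf : QuasiconvexOn 𝕜 s f) {x y z : E} (hx : x ∈ s) (hy : y ∈ s) (hz : z ∈ segment 𝕜 x y) :
    f z ≤ max (f x) (f y) :=
  ((hf _).segment_subset ⟨hx, le_max_left _ _⟩ ⟨hy, le_max_right _ _⟩ hz).2

theorem quasiconvexOn_Icc_of_le_max {g : ℝ → ℝ} {a b : ℝ}
    (hg : ∀ u ∈ Icc a b, ∀ v ∈ Icc a b, ∀ α ∈ Icc (0 : ℝ) 1,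
      g (α * u + (1 - α) * v) ≤ max (g u) (g v)) :
    QuasiconvexOn ℝ (Icc a b) g := by
  refine quasiconvexOn_iff_le_max.2 ⟨convex_Icc a b, fun u hu v hv α β hα _ hαβ => ?_⟩
  obtain rfl : β = 1 - α := by linarith
  exact hg u hu v hv α ⟨hα, by linarith⟩

theorem integral_sub_pow_mul_eq_s4 {g g' : ℝ → ℝ} {a b : ℝ} (x : ℝ) (m : ℕ)
    (hg : ∀ t ∈ uIcc a b, HasDerivAt g (g' t) t) (hg' : IntervalIntegrable g' volume a b) :
    ∫ t in a..b, (t - x) ^ m * g t =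
      ((b - x) ^ (m + 1) * g b - (a - x) ^ (m + 1) * g a
        - ∫ t in a..b, (t - x) ^ (m + 1) * g' t) / (m + 1) := by
  have hu : ∀ t ∈ uIcc a b,
      HasDerivAt (fun t => (t - x) ^ (m + 1)) ((m + 1) * (t - x) ^ m) t := fun t _ => by
    simpa using ((hasDerivAt_id' t).sub_const x).fun_pow (m + 1)
  have hu' : IntervalIntegrable (fun t => ((m : ℝ) + 1) * (t - x) ^ m) volume a b :=
    (continuous_const.mul ((continuous_id.sub continuous_const).pow m)).intervalIntegrable a b
  have key := intervalIntegral.integral_mul_deriv_eq_deriv_mul hu hg hu' hg'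
  simp only [mul_assoc, intervalIntegral.integral_const_mul] at key
  rw [eq_div_iff (by positivity)]
  linarith

theorem integral_eq_sum_add_integral_sub_pow_mul_iteratedDeriv (f : ℝ → ℝ) {a b : ℝ} (x : ℝ)
    (n : ℕ) (hder : ∀ m < n, ∀ t ∈ uIcc a b,
      HasDerivAt (iteratedDeriv m f) (iteratedDeriv (m + 1) f t) t)
    (hint : ∀ m < n, IntervalIntegrable (iteratedDeriv (m + 1) f) volume a b) :
    ∫ t in a..b, f t =
      ∑ k ∈ Finset.range n, (1 / (Nat.factorial (k + 1) : ℝ)) *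
        ((x - a) ^ (k + 1) * iteratedDeriv k f a +
          (-1 : ℝ) ^ k * (b - x) ^ (k + 1) * iteratedDeriv k f b)
      + (-1 : ℝ) ^ n / (Nat.factorial n : ℝ) *
        ∫ t in a..b, (t - x) ^ n * iteratedDeriv n f t := by
  induction n with
  | zero => simp
  | succ k ih =>
    rw [ih (fun m hm => hder m (by omega)) (fun m hm => hint m (by omega)), Finset.sum_range_succ,
      integral_sub_pow_mul_eq_s4 x k (hder k k.lt_succ_self) (hint k k.lt_succ_self),
      Nat.factorial_succ, show (x - a) ^ (k + 1) = (-1) ^ (k + 1) * (a - x) ^ (k + 1) by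
        rw [← mul_pow, neg_one_mul, neg_sub]]
    push_cast
    field_simp
    ring

theorem hasDerivAt_iteratedDeriv_of_lt {f : ℝ → ℝ} {n m : ℕ} {s : Set ℝ}
    (hf : ContDiff ℝ ((n - 1 : ℕ) : ℕ∞) f)
    (hf' : ∀ t ∈ s, HasDerivAt (iteratedDeriv (n - 1) f) (iteratedDeriv n f t) t) (hm : m < n) :
    ∀ t ∈ s, HasDerivAt (iteratedDeriv m f) (iteratedDeriv (m + 1) f t) t := by
  intro t ht
  rcases (Nat.le_sub_one_of_lt hm).eq_or_lt with rfl | hlt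
  · rw [Nat.sub_add_cancel (by omega)]
    exact hf' t ht
  · rw [iteratedDeriv_succ]
    exact (hf.differentiable_iteratedDeriv m (by exact_mod_cast hlt) t).hasDerivAt

theorem intervalIntegrable_iteratedDeriv_succ_of_lt {f : ℝ → ℝ} {n m : ℕ} {a b : ℝ}
    (hf : ContDiff ℝ ((n - 1 : ℕ) : ℕ∞) f)
    (hint : IntervalIntegrable (iteratedDeriv n f) volume a b) (hm : m < n) :
    IntervalIntegrable (iteratedDeriv (m + 1) f) volume a b := by
  rcases (Nat.le_sub_one_of_lt hm).eq_or_lt with rfl | hlt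
  · rwa [Nat.sub_add_cancel (by omega)]
  · exact (hf.continuous_iteratedDeriv (m + 1) (by exact_mod_cast hlt)).intervalIntegrable a b

theorem integral_abs_sub_rpow {a b x r : ℝ} (hx : x ∈ Icc a b) (hr : 0 ≤ r) :
    ∫ t in a..b, |t - x| ^ r = ((x - a) ^ (r + 1) + (b - x) ^ (r + 1)) / (r + 1) := by
  have hc : Continuous fun t : ℝ => |t - x| ^ r :=
    (continuous_id.sub continuous_const).abs.rpow_const fun _ => Or.inr hr
  have hleft : ∫ t in a..x, |t - x| ^ r = ∫ t in a..x, (x - t) ^ r :=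
    intervalIntegral.integral_congr fun t ht => by
      rw [uIcc_of_le hx.1] at ht
      rw [abs_of_nonpos (by linarith [ht.2]), neg_sub]
  have hright : ∫ t in x..b, |t - x| ^ r = ∫ t in x..b, (t - x) ^ r :=
    intervalIntegral.integral_congr fun t ht => by
      rw [uIcc_of_le hx.2] at ht
      rw [abs_of_nonneg (by linarith [ht.1])]
  rw [← intervalIntegral.integral_add_adjacent_intervals (hc.intervalIntegrable a x)
    (hc.intervalIntegrable x b), hleft, hright,
    intervalIntegral.integral_comp_sub_left (fun s => s ^ r),
    intervalIntegral.integral_comp_sub_right (fun s => s ^ r), sub_self,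
    integral_rpow (Or.inl (by linarith)), integral_rpow (Or.inl (by linarith)),
    Real.zero_rpow (by positivity)]
  ring

theorem abs_integral_mul_le_of_abs_rpow_le {p q : ℝ} (hpq : p.HolderConjugate q) {a b : ℝ}
    (hab : a ≤ b) {u v : ℝ → ℝ} (hu : ContinuousOn u (Icc a b))
    (hv : IntervalIntegrable v volume a b) {M : ℝ} (hM : ∀ t ∈ Icc a b, |v t| ^ q ≤ M) :
    |∫ t in a..b, u t * v t| ≤ (∫ t in a..b, |u t| ^ p) ^ (1 / p) * ((b - a) * M) ^ (1 / q) := by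
  have hq : 0 < q := hpq.symm.pos
  set μ := volume.restrict (Ioc a b)
  have hM_ae : ∀ᵐ t ∂μ, |v t| ^ q ≤ M := by
    filter_upwards [ae_restrict_mem measurableSet_Ioc] with t ht
    exact hM t (Ioc_subset_Icc_self ht)
  have hu_Lp : MemLp (fun t => |u t|) (ENNReal.ofReal p) μ := by
    obtain ⟨C, hC⟩ := isCompact_Icc.exists_bound_of_continuousOn hu
    refine (MemLp.of_bound ((hu.mono Ioc_subset_Icc_self).aestronglyMeasurable
      measurableSet_Ioc) C ?_).abs
    filter_upwards [ae_restrict_mem measurableSet_Ioc] with t ht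
    exact hC t (Ioc_subset_Icc_self ht)
  have hv_Lp : MemLp (fun t => |v t|) (ENNReal.ofReal q) μ := by
    refine (MemLp.of_bound ((intervalIntegrable_iff_integrableOn_Ioc_of_le hab).1 hv).1
      (M ^ (1 / q)) ?_).abs
    filter_upwards [hM_ae] with t ht
    rw [Real.norm_eq_abs, one_div]
    have hM0 : 0 ≤ M := (Real.rpow_nonneg (abs_nonneg _) q).trans ht
    exact (Real.le_rpow_inv_iff_of_pos (abs_nonneg _) hM0 hq).2 ht
  have hv_int : ∫ t, |v t| ^ q ∂μ ≤ (b - a) * M := by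
    calc ∫ t, |v t| ^ q ∂μ ≤ ∫ _, M ∂μ :=
          integral_mono_of_nonneg (.of_forall fun t => by positivity) (integrable_const M) hM_ae
      _ = (b - a) * M := by simp [μ, hab]
  calc |∫ t in a..b, u t * v t|
      ≤ ∫ t, |u t| * |v t| ∂μ := by
        rw [intervalIntegral.integral_of_le hab]
        simpa only [abs_mul] using abs_integral_le_integral_abs (μ := μ) (f := fun t => u t * v t)
    _ ≤ (∫ t, |u t| ^ p ∂μ) ^ (1 / p) * (∫ t, |v t| ^ q ∂μ) ^ (1 / q) :=
        integral_mul_le_Lp_mul_Lq_of_nonneg hpq (.of_forall fun t => abs_nonneg _)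
          (.of_forall fun t => abs_nonneg _) hu_Lp hv_Lp
    _ ≤ (∫ t in a..b, |u t| ^ p) ^ (1 / p) * ((b - a) * M) ^ (1 / q) := by
        rw [intervalIntegral.integral_of_le hab]
        gcongr

theorem stmt_4_general (f : ℝ → ℝ) (a b : ℝ) (n : ℕ)
    (p q : ℝ) (hp : 1 < p) (hpq : 1 / p + 1 / q = 1)
    (hf : ContDiff ℝ ((n - 1 : ℕ) : ℕ∞) f)
    (hf' : ∀ t ∈ Set.Icc a b,
      HasDerivAt (iteratedDeriv (n - 1) f) (iteratedDeriv n f t) t)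
    (hint : IntervalIntegrable (iteratedDeriv n f) volume a b)
    (hq : ∀ u ∈ Set.Icc a b, ∀ v ∈ Set.Icc a b, ∀ α ∈ Set.Icc (0 : ℝ) 1,
      |iteratedDeriv n f (α * u + (1 - α) * v)| ^ q ≤
        max (|iteratedDeriv n f u| ^ q) (|iteratedDeriv n f v| ^ q))
    (x : ℝ) (hx : x ∈ Set.Icc a b) :
    |(∫ t in a..b, f t) -
      ∑ k ∈ Finset.range n, (1 / (Nat.factorial (k + 1) : ℝ)) *
        ((x - a) ^ (k + 1) * iteratedDeriv k f a +
          (-1 : ℝ) ^ k * (b - x) ^ (k + 1) * iteratedDeriv k f b)| ≤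
    ((b - a) ^ (1 / q) / (Nat.factorial n : ℝ)) *
      (((x - a) ^ ((n : ℝ) * p + 1) + (b - x) ^ ((n : ℝ) * p + 1)) / ((n : ℝ) * p + 1)) ^ (1 / p) *
      (max (|iteratedDeriv n f a| ^ q) (|iteratedDeriv n f b| ^ q)) ^ (1 / q) := by
  have hab : a ≤ b := hx.1.trans hx.2
  have hconj : p.HolderConjugate q :=
    Real.holderConjugate_iff.2 ⟨hp, by simpa only [one_div] using hpq⟩
  set M := max (|iteratedDeriv n f a| ^ q) (|iteratedDeriv n f b| ^ q)
  have hM : ∀ t ∈ Icc a b, |iteratedDeriv n f t| ^ q ≤ M := fun t ht =>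
    (quasiconvexOn_Icc_of_le_max (g := fun t => |iteratedDeriv n f t| ^ q) hq).le_max_of_mem_segment
      (left_mem_Icc.2 hab) (right_mem_Icc.2 hab) (segment_eq_Icc hab ▸ ht)
  have hkernel : ∫ t in a..b, |(t - x) ^ n| ^ p =
      ((x - a) ^ ((n : ℝ) * p + 1) + (b - x) ^ ((n : ℝ) * p + 1)) / ((n : ℝ) * p + 1) := by
    simp_rw [abs_pow, ← Real.rpow_natCast, ← Real.rpow_mul (abs_nonneg _)]
    exact integral_abs_sub_rpow hx (mul_nonneg n.cast_nonneg hconj.nonneg)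
  have holder := abs_integral_mul_le_of_abs_rpow_le hconj hab (u := fun t => (t - x) ^ n)
    (by fun_prop) hint hM
  rw [integral_eq_sum_add_integral_sub_pow_mul_iteratedDeriv f x n
      (fun m hm => hasDerivAt_iteratedDeriv_of_lt hf (uIcc_of_le hab ▸ hf') hm)
      (fun m hm => intervalIntegrable_iteratedDeriv_succ_of_lt hf hint hm),
    add_sub_cancel_left, abs_mul, abs_div, abs_pow, abs_neg, abs_one, one_pow, Nat.abs_cast]
  rw [hkernel] at holder
  calc 1 / (n.factorial : ℝ) * |∫ t in a..b, (t - x) ^ n * iteratedDeriv n f t|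
      ≤ 1 / (n.factorial : ℝ) * (_ * ((b - a) * M) ^ (1 / q)) := by gcongr
    _ = _ := by rw [Real.mul_rpow (by linarith) (by positivity)]; ring

theorem stmt_4 (f : ℝ → ℝ) (a b : ℝ) (hab : a < b) (n : ℕ) (hn : 1 ≤ n)
    (p q : ℝ) (hp : 1 < p) (hpq : 1 / p + 1 / q = 1)
    (hf : ContDiff ℝ ((n - 1 : ℕ) : ℕ∞) f)
    (hf' : ∀ t ∈ Set.Icc a b,
      HasDerivAt (iteratedDeriv (n - 1) f) (iteratedDeriv n f t) t)
    (hint : IntervalIntegrable (iteratedDeriv n f) volume a b)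
    (hq : ∀ u ∈ Set.Icc a b, ∀ v ∈ Set.Icc a b, ∀ α ∈ Set.Icc (0 : ℝ) 1,
      |iteratedDeriv n f (α * u + (1 - α) * v)| ^ q ≤
        max (|iteratedDeriv n f u| ^ q) (|iteratedDeriv n f v| ^ q))
    (x : ℝ) (hx : x ∈ Set.Icc a b) :
    |(∫ t in a..b, f t) -
      ∑ k ∈ Finset.range n, (1 / (Nat.factorial (k + 1) : ℝ)) *
        ((x - a) ^ (k + 1) * iteratedDeriv k f a +
          (-1 : ℝ) ^ k * (b - x) ^ (k + 1) * iteratedDeriv k f b)| ≤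
    ((b - a) ^ (1 / q) / (Nat.factorial n : ℝ)) *
      (((x - a) ^ ((n : ℝ) * p + 1) + (b - x) ^ ((n : ℝ) * p + 1)) / ((n : ℝ) * p + 1)) ^ (1 / p) *
      (max (|iteratedDeriv n f a| ^ q) (|iteratedDeriv n f b| ^ q)) ^ (1 / q) :=
  stmt_4_general f a b n p q hp hpq hf hf' hint hq x hx
end

section
/- Let f : [a,b] → ℝ be n-times differentiable (n ≥ 2) and suppose |f^{(n)}|^q is quasi-convex on [a,b] for some q ≥ 1. Then |(f(a)+f(b))/2 - (1/(b-a))∫_a^b f(x) dx - Σ_{k=2}^{n-1} ((k-1)(b-a)^k/(2(k+1)!)) f^{(k)}(a)| ≤ ((b-a)^n (n-1)/(2(n+1)!))·(max{|f^{(n)}(a)|^q, |f^{(n)}(b)|^q})^{1/q}. -/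
/-!
Peano-kernel argument. With `T m t = (b - t) ^ m / m!`, the kernels `K 0 = -1 / (b - a)` and
`K (m + 1) = T m / 2 - T (m + 1) / (b - a)` satisfy `K (m + 1)' = -K m`, so integrating
`∫ K n f⁽ⁿ⁾` by parts `n` times leaves `-(b - a)⁻¹ ∫ f` plus boundary terms: `(f a + f b) / 2`
from `K 1`, nothing from `K 2`, and `-K (k + 1) a * f⁽ᵏ⁾ a` for `k ≥ 2`, since `K (k + 1) b = 0`.
For `n ≥ 2` the kernel `K n` is nonnegative on `[a, b]` with integral
`K (n + 1) a = (n - 1) (b - a)ⁿ / (2 (n + 1)!)`, and quasi-convexity bounds `|f⁽ⁿ⁾|` on `[a, b]`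
by `(max (|f⁽ⁿ⁾ a| ^ q) (|f⁽ⁿ⁾ b| ^ q)) ^ (1 / q)`.
-/

open MeasureTheory Set intervalIntegral
open scoped Nat

theorem integral_mul_eq_sum_add_integral_mul {a b : ℝ} {K g : ℕ → ℝ → ℝ} {n : ℕ}
    (hK : ∀ k < n, ∀ t ∈ uIcc a b, HasDerivAt (K (k + 1)) (-K k t) t)
    (hKint : ∀ k < n, IntervalIntegrable (K k) volume a b)
    (hg : ∀ k < n, ∀ t ∈ uIcc a b, HasDerivAt (g k) (g (k + 1) t) t)
    (hgn : IntervalIntegrable (g n) volume a b) :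
    ∫ t in a..b, K n t * g n t =
      ∑ k ∈ Finset.range n, (K (k + 1) b * g k b - K (k + 1) a * g k a) +
        ∫ t in a..b, K 0 t * g 0 t := by
  induction n with
  | zero => simp
  | succ n ih =>
    have hgn' : IntervalIntegrable (g n) volume a b := ContinuousOn.intervalIntegrable
      fun t ht => (hg n n.lt_succ_self t ht).continuousAt.continuousWithinAt
    rw [integral_mul_deriv_eq_deriv_mul (hK n n.lt_succ_self) (hg n n.lt_succ_self)
      (hKint n n.lt_succ_self).neg hgn]
    simp only [neg_mul, intervalIntegral.integral_neg]
    rw [ih (fun k hk => hK k (by omega)) (fun k hk => hKint k (by omega))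
      (fun k hk => hg k (by omega)) hgn', Finset.sum_range_succ]
    ring

noncomputable def trapezoidKernel (a b : ℝ) : ℕ → ℝ → ℝ
  | 0, _ => -(b - a)⁻¹
  | m + 1, t => (b - t) ^ m / m ! / 2 - (b - t) ^ (m + 1) / (m + 1)! / (b - a)

theorem hasDerivAt_sub_pow_div_factorial (b t : ℝ) (m : ℕ) :
    HasDerivAt (fun t => (b - t) ^ (m + 1) / (m + 1)!) (-((b - t) ^ m / m !)) t := by
  refine ((((hasDerivAt_id t).const_sub b).pow (m + 1)).div_const ((m + 1)! : ℝ)).congr_deriv ?_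
  rw [Nat.factorial_succ]
  push_cast
  field_simp
  simp

namespace trapezoidKernel

theorem continuous (a b : ℝ) (m : ℕ) : Continuous (trapezoidKernel a b m) := by
  cases m <;> unfold trapezoidKernel <;> fun_prop

variable {a b : ℝ}

theorem hasDerivAt_succ (m : ℕ) (t : ℝ) :
    HasDerivAt (trapezoidKernel a b (m + 1)) (-trapezoidKernel a b m t) t := by
  cases m with
  | zero =>
    have hK1 : trapezoidKernel a b 1 = fun x => 1 / 2 - (b - x) / (b - a) := by
      funext x; simp [trapezoidKernel]
    rw [hK1]
    refine ((((hasDerivAt_id t).const_sub b).div_const (b - a)).const_sub _).congr_deriv ?_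
    simp [trapezoidKernel]
    ring
  | succ m =>
    refine (((hasDerivAt_sub_pow_div_factorial b t m).div_const 2).sub
      ((hasDerivAt_sub_pow_div_factorial b t (m + 1)).div_const (b - a))).congr_deriv ?_
    simp only [trapezoidKernel]; ring

theorem apply_add_two_right (m : ℕ) : trapezoidKernel a b (m + 2) b = 0 := by
  simp [trapezoidKernel]

theorem succ_apply_left (hab : a ≠ b) (m : ℕ) :
    trapezoidKernel a b (m + 1) a = ((m : ℝ) - 1) * (b - a) ^ m / (2 * (m + 1)!) := by
  have hba : b - a ≠ 0 := sub_ne_zero.2 hab.symm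
  simp only [trapezoidKernel, Nat.factorial_succ]
  push_cast
  field_simp
  ring

theorem nonneg {m : ℕ} (hm : 2 ≤ m) {t : ℝ} (ht : t ∈ Icc a b) : 0 ≤ trapezoidKernel a b m t := by
  obtain ⟨m, rfl⟩ := Nat.exists_eq_add_of_le' hm
  obtain ⟨hat, htb⟩ := ht
  have hfac : ((m + 2)! : ℝ) = (m + 2) * (m + 1)! := by push_cast [Nat.factorial_succ]; ring
  have hfactor : trapezoidKernel a b (m + 2) t =
      (b - t) ^ (m + 1) / (m + 2)! * ((m + 2) / 2 - (b - t) / (b - a)) := by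
    simp only [trapezoidKernel, hfac]
    field_simp
    ring
  have hratio : (b - t) / (b - a) ≤ 1 := div_le_one_of_le₀ (by linarith) (by linarith)
  rw [hfactor]
  apply mul_nonneg (by have := sub_nonneg.2 htb; positivity)
  linarith [(m.cast_nonneg : (0 : ℝ) ≤ m)]

theorem integral {m : ℕ} (hab : a ≠ b) (hm : 1 ≤ m) :
    ∫ t in a..b, trapezoidKernel a b m t = ((m : ℝ) - 1) * (b - a) ^ m / (2 * (m + 1)!) := by
  obtain ⟨m, rfl⟩ := Nat.exists_eq_add_of_le' hm
  rw [← succ_apply_left hab, ← neg_neg (∫ t in a..b, _), ← intervalIntegral.integral_neg,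
    integral_eq_sub_of_hasDerivAt (fun t _ => hasDerivAt_succ (m + 1) t)
      ((continuous a b (m + 1)).neg.intervalIntegrable a b), apply_add_two_right]
  ring

end trapezoidKernel

theorem trapezoid_sub_sum_eq_integral_trapezoidKernel {f : ℝ → ℝ} {a b : ℝ} (hab : a < b)
    {n : ℕ} (hn : 2 ≤ n)
    (hf : ∀ k < n, ∀ t ∈ Icc a b, HasDerivAt (iteratedDeriv k f) (iteratedDeriv (k + 1) f t) t)
    (hint : IntervalIntegrable (iteratedDeriv n f) volume a b) :
    (f a + f b) / 2 - (1 / (b - a)) * (∫ x in a..b, f x) -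
      ∑ k ∈ Finset.Icc 2 (n - 1), ((k : ℝ) - 1) * (b - a) ^ k / (2 * (k + 1)!) * iteratedDeriv k f a =
      ∫ t in a..b, trapezoidKernel a b n t * iteratedDeriv n f t := by
  rw [← uIcc_of_le hab.le] at hf
  rw [integral_mul_eq_sum_add_integral_mul (fun k _ t _ => trapezoidKernel.hasDerivAt_succ k t)
    (fun k _ => (trapezoidKernel.continuous a b k).intervalIntegrable a b) hf hint]
  obtain ⟨m, rfl⟩ := Nat.exists_eq_add_of_le' hn
  rw [Finset.range_eq_Ico, ← Finset.sum_Ico_consecutive _ (Nat.zero_le 2) (by omega : 2 ≤ m + 2),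
    show Finset.Icc 2 (m + 2 - 1) = Finset.Ico 2 (m + 2) from
      (Finset.Ico_add_one_right_eq_Icc 2 (m + 1)).symm]
  have hterm : ∀ i ∈ Finset.Ico 2 (m + 2),
      trapezoidKernel a b (i + 1) b * iteratedDeriv i f b -
        trapezoidKernel a b (i + 1) a * iteratedDeriv i f a =
      -(((i : ℝ) - 1) * (b - a) ^ i / (2 * (i + 1)!) * iteratedDeriv i f a) := by
    intro i hi
    obtain ⟨j, rfl⟩ := Nat.exists_eq_add_of_le' (Finset.mem_Ico.1 hi).1
    rw [trapezoidKernel.apply_add_two_right, trapezoidKernel.succ_apply_left hab.ne]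
    ring
  rw [Finset.sum_congr rfl hterm, Finset.sum_neg_distrib, ← Finset.range_eq_Ico]
  simp only [Finset.sum_range_succ, Finset.sum_range_zero, trapezoidKernel.succ_apply_left hab.ne,
    iteratedDeriv_zero]
  simp [trapezoidKernel]
  ring

theorem abs_le_rpow_max_of_le_max {g : ℝ → ℝ} {a b q t : ℝ} (hq : 0 < q) (hab : a ≤ b)
    (hg : ∀ α ∈ Icc (0 : ℝ) 1,
      |g (α * a + (1 - α) * b)| ^ q ≤ max (|g a| ^ q) (|g b| ^ q))
    (ht : t ∈ Icc a b) :
    |g t| ≤ (max (|g a| ^ q) (|g b| ^ q)) ^ (1 / q) := by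
  have hmax : |g t| ^ q ≤ max (|g a| ^ q) (|g b| ^ q) := by
    rw [← segment_eq_Icc hab] at ht
    obtain ⟨α, β, hα, hβ, hαβ, rfl⟩ := ht
    rw [eq_sub_of_add_eq' hαβ]
    exact hg α ⟨hα, by linarith⟩
  calc |g t| = (|g t| ^ q) ^ (1 / q) := by
        rw [← Real.rpow_mul (abs_nonneg _), mul_one_div_cancel hq.ne', Real.rpow_one]
    _ ≤ _ := Real.rpow_le_rpow (by positivity) hmax (by positivity)

theorem stmt_6 (f : ℝ → ℝ) (a b : ℝ) (hab : a < b) (n : ℕ) (hn : 2 ≤ n)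
    (q : ℝ) (hq1 : 1 ≤ q)
    (hf : ∀ k < n, ∀ t ∈ Set.Icc a b,
      HasDerivAt (iteratedDeriv k f) (iteratedDeriv (k + 1) f t) t)
    (hint : IntervalIntegrable (iteratedDeriv n f) volume a b)
    (hq : ∀ u ∈ Set.Icc a b, ∀ v ∈ Set.Icc a b, ∀ α ∈ Set.Icc (0 : ℝ) 1,
      |iteratedDeriv n f (α * u + (1 - α) * v)| ^ q ≤
        max (|iteratedDeriv n f u| ^ q) (|iteratedDeriv n f v| ^ q)) :
    |(f a + f b) / 2 - (1 / (b - a)) * (∫ x in a..b, f x) -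
      ∑ k ∈ Finset.Icc 2 (n - 1),
        (((k : ℝ) - 1) * (b - a) ^ k / (2 * (Nat.factorial (k + 1) : ℝ))) *
          iteratedDeriv k f a| ≤
    ((b - a) ^ n * ((n : ℝ) - 1) / (2 * (Nat.factorial (n + 1) : ℝ))) *
      (max (|iteratedDeriv n f a| ^ q) (|iteratedDeriv n f b| ^ q)) ^ (1 / q) := by
  set M := (max (|iteratedDeriv n f a| ^ q) (|iteratedDeriv n f b| ^ q)) ^ (1 / q)
  have hbound : ∀ t ∈ Icc a b, |iteratedDeriv n f t| ≤ M := fun t ht =>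
    abs_le_rpow_max_of_le_max (by linarith) hab.le
      (hq a (left_mem_Icc.2 hab.le) b (right_mem_Icc.2 hab.le)) ht
  rw [trapezoid_sub_sum_eq_integral_trapezoidKernel hab hn hf hint]
  calc |∫ t in a..b, trapezoidKernel a b n t * iteratedDeriv n f t|
      ≤ ∫ t in a..b, trapezoidKernel a b n t * M := by
        rw [← Real.norm_eq_abs]
        refine norm_integral_le_of_norm_le hab.le (ae_of_all _ fun t ht => ?_)
          ((trapezoidKernel.continuous a b n).intervalIntegrable a b |>.mul_const M)
        have hK := trapezoidKernel.nonneg hn (Ioc_subset_Icc_self ht)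
        rw [Real.norm_eq_abs, abs_mul, abs_of_nonneg hK]
        exact mul_le_mul_of_nonneg_left (hbound t (Ioc_subset_Icc_self ht)) hK
    _ = _ := by
        rw [intervalIntegral.integral_mul_const, trapezoidKernel.integral hab.ne (by omega)]
        ring
end

section
/- Let f : [a,b] → ℝ be n-times differentiable (n ≥ 2) with |f^{(n)}| quasi-convex on [a,b]. Then |(f(a)+f(b))/2 - (1/(b-a))∫_a^b f(x) dx - Σ_{k=2}^{n-1} ((k-1)(b-a)^k/(2(k+1)!)) f^{(k)}(a)| ≤ ((b-a)^n (n-1)/(2(n+1)!))·max{|f^{(n)}(a)|, |f^{(n)}(b)|}. -/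
/-!
Integrating by parts against the Peano kernels `P₁, P₂, …` of the trapezoid rule, which satisfy
`P₁' = 1/(b-a)`, `P_{n+1}' = -Pₙ` and `P_{n+1}(b) = 0`, expresses the left-hand side as
`∫ₐᵇ Pₙ f⁽ⁿ⁾`; the boundary terms `P_{k+1}(a) f⁽ᵏ⁾(a)` are the terms of the sum.
For `n ≥ 2` the kernel `Pₙ` is nonnegative on `[a, b]`, and quasi-convexity bounds `|f⁽ⁿ⁾|` there
by `max |f⁽ⁿ⁾(a)| |f⁽ⁿ⁾(b)|`, so the remainder is at most that maximum times
`∫ₐᵇ Pₙ = P_{n+1}(a) = (n-1)(b-a)ⁿ / (2 (n+1)!)`.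
-/

open MeasureTheory Set intervalIntegral
open scoped Nat

-- Meaningful for `n ≥ 1` only: the exponent `n - 1` is truncated.
noncomputable def trapezoidPeanoKernel (a b : ℝ) (n : ℕ) (x : ℝ) : ℝ :=
  (b - x) ^ (n - 1) * (((n : ℝ) - 2) * (b - x) + n * (x - a)) / (2 * (b - a) * n !)

namespace trapezoidPeanoKernel

variable {a b : ℝ} {n : ℕ}

local notation "P" => trapezoidPeanoKernel a b

theorem continuous (a b : ℝ) (n : ℕ) : Continuous (trapezoidPeanoKernel a b n) := by
  unfold trapezoidPeanoKernel; fun_prop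

theorem hasDerivAt_one (x : ℝ) : HasDerivAt (P 1) (1 / (b - a)) x := by
  have h : HasDerivAt (fun y : ℝ => (((1 : ℕ) : ℝ) - 2) * (b - y) + ((1 : ℕ) : ℝ) * (y - a))
      ((((1 : ℕ) : ℝ) - 2) * (-1) + ((1 : ℕ) : ℝ) * 1) x :=
    (((hasDerivAt_id x).const_sub b).const_mul _).add
      (((hasDerivAt_id x).sub_const a).const_mul _)
  have hP : P 1 = fun y => ((((1 : ℕ) : ℝ) - 2) * (b - y) + ((1 : ℕ) : ℝ) * (y - a)) /
      (2 * (b - a) * (1 ! : ℝ)) := by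
    ext y; simp [trapezoidPeanoKernel]
  rw [hP]
  refine (h.div_const _).congr_deriv ?_
  norm_num
  simpa using mul_div_mul_left 1 (b - a) two_ne_zero

theorem hasDerivAt_succ (hn : 1 ≤ n) (x : ℝ) : HasDerivAt (P (n + 1)) (-P n x) x := by
  obtain ⟨m, rfl⟩ : ∃ m, n = m + 1 := ⟨n - 1, by omega⟩
  have hpow : HasDerivAt (fun y : ℝ => (b - y) ^ (m + 1)) ((m + 1 : ℕ) * (b - x) ^ m * (-1)) x :=
    ((hasDerivAt_id x).const_sub b).pow (m + 1)
  have hlin : HasDerivAt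
      (fun y : ℝ => (((m + 2 : ℕ) : ℝ) - 2) * (b - y) + ((m + 2 : ℕ) : ℝ) * (y - a))
      ((((m + 2 : ℕ) : ℝ) - 2) * (-1) + ((m + 2 : ℕ) : ℝ) * 1) x :=
    (((hasDerivAt_id x).const_sub b).const_mul _).add
      (((hasDerivAt_id x).sub_const a).const_mul _)
  refine ((hpow.mul hlin).div_const (2 * (b - a) * ((m + 2) ! : ℝ))).congr_deriv ?_
  have hm : (m : ℝ) + 2 ≠ 0 := by positivity
  simp only [trapezoidPeanoKernel, Nat.factorial_succ (m + 1), Nat.add_sub_cancel]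
  push_cast
  rw [← mul_div_mul_left _ (2 * (b - a) * ((m + 1) ! : ℝ)) hm]
  ring_nf

theorem apply_right (hn : 2 ≤ n) : P n b = 0 := by
  simp [trapezoidPeanoKernel, zero_pow (by omega : n - 1 ≠ 0)]

theorem one_apply_right (hab : a ≠ b) : P 1 b = 1 / 2 := by
  have : b - a ≠ 0 := sub_ne_zero.2 hab.symm
  simp [trapezoidPeanoKernel]
  field_simp

theorem succ_apply_left (hab : a ≠ b) (n : ℕ) :
    P (n + 1) a = ((n : ℝ) - 1) * (b - a) ^ n / (2 * ((n + 1) ! : ℝ)) := by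
  have : b - a ≠ 0 := sub_ne_zero.2 hab.symm
  simp only [trapezoidPeanoKernel, Nat.add_sub_cancel, sub_self, mul_zero, add_zero]
  push_cast
  field_simp
  ring

theorem nonneg (hn : 2 ≤ n) {x : ℝ} (hx : x ∈ Icc a b) : 0 ≤ P n x := by
  have hn' : (2 : ℝ) ≤ n := by exact_mod_cast hn
  have hbx : 0 ≤ b - x := by linarith [hx.2]
  have hxa : 0 ≤ x - a := by linarith [hx.1]
  unfold trapezoidPeanoKernel
  apply div_nonneg
  · exact mul_nonneg (pow_nonneg hbx _)
      (add_nonneg (mul_nonneg (by linarith) hbx) (mul_nonneg (by linarith) hxa))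
  · have : 0 ≤ b - a := by linarith [hx.1, hx.2]
    positivity

theorem integral_eq (hn : 1 ≤ n) : ∫ x in a..b, P n x = P (n + 1) a := by
  have h : ∀ x ∈ uIcc a b, HasDerivAt (fun y => -P (n + 1) y) (P n x) x := fun x _ =>
    neg_neg (P n x) ▸ (hasDerivAt_succ hn x).neg
  rw [integral_eq_sub_of_hasDerivAt h ((continuous a b n).intervalIntegrable a b),
    apply_right (by omega)]
  ring

end trapezoidPeanoKernel

section PeanoRepresentation

variable {f : ℝ → ℝ} {a b : ℝ} {n : ℕ}

local notation "P" => trapezoidPeanoKernel a b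

theorem trapezoid_sub_integral_eq_integral_trapezoidPeanoKernel_one (hab : a ≠ b)
    (hf : ∀ t ∈ uIcc a b, HasDerivAt f (deriv f t) t)
    (hint : IntervalIntegrable (deriv f) volume a b) :
    (f a + f b) / 2 - (1 / (b - a)) * (∫ x in a..b, f x) = ∫ x in a..b, P 1 x * deriv f x := by
  rw [integral_mul_deriv_eq_deriv_mul (fun x _ => trapezoidPeanoKernel.hasDerivAt_one x) hf
      intervalIntegrable_const hint, intervalIntegral.integral_const_mul,
    trapezoidPeanoKernel.one_apply_right hab, trapezoidPeanoKernel.succ_apply_left hab]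
  norm_num
  ring

theorem integral_trapezoidPeanoKernel_mul_iteratedDeriv (hn : 1 ≤ n)
    (hf : ∀ t ∈ uIcc a b, HasDerivAt (iteratedDeriv n f) (iteratedDeriv (n + 1) f t) t)
    (hint : IntervalIntegrable (iteratedDeriv (n + 1) f) volume a b) :
    ∫ x in a..b, P n x * iteratedDeriv n f x =
      P (n + 1) a * iteratedDeriv n f a +
        ∫ x in a..b, P (n + 1) x * iteratedDeriv (n + 1) f x := by
  rw [integral_mul_deriv_eq_deriv_mul (fun x _ => trapezoidPeanoKernel.hasDerivAt_succ hn x) hf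
      ((trapezoidPeanoKernel.continuous a b n).intervalIntegrable a b).neg hint,
    trapezoidPeanoKernel.apply_right (by omega)]
  simp only [neg_mul, intervalIntegral.integral_neg]
  ring

theorem trapezoid_sub_sum_eq_integral_trapezoidPeanoKernel (hab : a ≠ b) (hn : 1 ≤ n)
    (hf : ∀ k < n, ∀ t ∈ uIcc a b,
      HasDerivAt (iteratedDeriv k f) (iteratedDeriv (k + 1) f t) t)
    (hint : IntervalIntegrable (iteratedDeriv n f) volume a b) :
    (f a + f b) / 2 - (1 / (b - a)) * (∫ x in a..b, f x) -
        ∑ k ∈ Finset.Ico 1 n, P (k + 1) a * iteratedDeriv k f a =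
      ∫ x in a..b, P n x * iteratedDeriv n f x := by
  induction n, hn using Nat.le_induction with
  | base =>
    simp only [zero_add, iteratedDeriv_zero, iteratedDeriv_one, Nat.lt_one_iff, forall_eq] at hf
    simpa [iteratedDeriv_one] using
      trapezoid_sub_integral_eq_integral_trapezoidPeanoKernel_one hab hf (by simpa using hint)
  | succ n hn ih =>
    have hfn : ∀ t ∈ uIcc a b, HasDerivAt (iteratedDeriv n f) (iteratedDeriv (n + 1) f t) t :=
      hf n n.lt_succ_self
    have hint_n : IntervalIntegrable (iteratedDeriv n f) volume a b :=
      (HasDerivAt.continuousOn hfn).intervalIntegrable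
    rw [Finset.sum_Ico_succ_top hn, ← sub_sub, ih (fun k hk => hf k (by omega)) hint_n,
      integral_trapezoidPeanoKernel_mul_iteratedDeriv hn hfn hint]
    ring

end PeanoRepresentation

theorem Finset.sum_Icc_two_pred_eq_sum_Ico_one {M : Type*} [AddCommMonoid M] {g : ℕ → M}
    (hg : g 1 = 0) (n : ℕ) : ∑ k ∈ Finset.Icc 2 (n - 1), g k = ∑ k ∈ Finset.Ico 1 n, g k := by
  refine Finset.sum_subset (fun k hk => ?_) (fun k hk hk' => ?_)
  · simp only [Finset.mem_Icc, Finset.mem_Ico] at hk ⊢; omega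
  · simp only [Finset.mem_Icc, Finset.mem_Ico] at hk hk'
    obtain rfl : k = 1 := by omega
    exact hg

theorem le_max_of_forall_convexCombination_le {g : ℝ → ℝ} {a b x : ℝ} (hab : a ≤ b)
    (hg : ∀ α ∈ Icc (0 : ℝ) 1, g (α * a + (1 - α) * b) ≤ max (g a) (g b)) (hx : x ∈ Icc a b) :
    g x ≤ max (g a) (g b) := by
  rw [← segment_eq_Icc hab] at hx
  obtain ⟨α, β, hα, hβ, hαβ, rfl⟩ := hx
  obtain rfl : β = 1 - α := by linarith
  exact hg α ⟨hα, by linarith⟩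

theorem abs_integral_mul_le_of_nonneg_of_abs_le {K g : ℝ → ℝ} {a b M : ℝ} (hab : a ≤ b)
    (hK : ContinuousOn K (Icc a b)) (hK_nonneg : ∀ x ∈ Icc a b, 0 ≤ K x)
    (hg : ∀ x ∈ Icc a b, |g x| ≤ M) :
    |∫ x in a..b, K x * g x| ≤ (∫ x in a..b, K x) * M := by
  rw [← intervalIntegral.integral_mul_const, ← Real.norm_eq_abs]
  refine intervalIntegral.norm_integral_le_of_norm_le hab
    (Filter.Eventually.of_forall fun x hx => ?_)
    ((hK.mul continuousOn_const).intervalIntegrable_of_Icc (u := fun x => K x * M) hab)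
  have hx : x ∈ Icc a b := Ioc_subset_Icc_self hx
  rw [Real.norm_eq_abs, abs_mul, abs_of_nonneg (hK_nonneg x hx)]
  exact mul_le_mul_of_nonneg_left (hg x hx) (hK_nonneg x hx)

theorem stmt_7 (f : ℝ → ℝ) (a b : ℝ) (hab : a < b) (n : ℕ) (hn : 2 ≤ n)
    (hf : ∀ k < n, ∀ t ∈ Set.Icc a b,
      HasDerivAt (iteratedDeriv k f) (iteratedDeriv (k + 1) f t) t)
    (hint : IntervalIntegrable (iteratedDeriv n f) volume a b)
    (hq : ∀ u ∈ Set.Icc a b, ∀ v ∈ Set.Icc a b, ∀ α ∈ Set.Icc (0 : ℝ) 1,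
      |iteratedDeriv n f (α * u + (1 - α) * v)| ≤
        max |iteratedDeriv n f u| |iteratedDeriv n f v|) :
    |(f a + f b) / 2 - (1 / (b - a)) * (∫ x in a..b, f x) -
      ∑ k ∈ Finset.Icc 2 (n - 1),
        (((k : ℝ) - 1) * (b - a) ^ k / (2 * (Nat.factorial (k + 1) : ℝ))) *
          iteratedDeriv k f a| ≤
    ((b - a) ^ n * ((n : ℝ) - 1) / (2 * (Nat.factorial (n + 1) : ℝ))) *
      max |iteratedDeriv n f a| |iteratedDeriv n f b| := by
  have ha : a ∈ Icc a b := left_mem_Icc.2 hab.le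
  have hb : b ∈ Icc a b := right_mem_Icc.2 hab.le
  have hf' : ∀ k < n, ∀ t ∈ uIcc a b,
      HasDerivAt (iteratedDeriv k f) (iteratedDeriv (k + 1) f t) t := by
    rwa [uIcc_of_le hab.le]
  have hbound : ∀ x ∈ Icc a b, |iteratedDeriv n f x| ≤
      max |iteratedDeriv n f a| |iteratedDeriv n f b| := fun x hx =>
    le_max_of_forall_convexCombination_le (g := fun x => |iteratedDeriv n f x|) hab.le
      (fun α hα => hq a ha b hb α hα) hx
  rw [Finset.sum_Icc_two_pred_eq_sum_Ico_one (by simp) n]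
  simp_rw [← trapezoidPeanoKernel.succ_apply_left hab.ne]
  rw [trapezoid_sub_sum_eq_integral_trapezoidPeanoKernel hab.ne (by omega) hf' hint]
  calc _ ≤ (∫ x in a..b, trapezoidPeanoKernel a b n x) *
        max |iteratedDeriv n f a| |iteratedDeriv n f b| :=
        abs_integral_mul_le_of_nonneg_of_abs_le hab.le
          (trapezoidPeanoKernel.continuous a b n).continuousOn
          (fun x hx => trapezoidPeanoKernel.nonneg hn hx) hbound
    _ = _ := by
        rw [trapezoidPeanoKernel.integral_eq (by omega),
          trapezoidPeanoKernel.succ_apply_left hab.ne]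
        ring
end

section
/- Let f : [a,b] → ℝ be n-times differentiable (n ≥ 2) and suppose |f^{(n)}|^q is quasi-convex on [a,b], where q > 1 and 1/p + 1/q = 1. Then |(f(a)+f(b))/2 - (1/(b-a))∫_a^b f(x) dx - Σ_{k=2}^{n-1} ((k-1)(b-a)^k/(2(k+1)!)) f^{(k)}(a)| ≤ ((b-a)^n/(2^{1+1/q} n!))·(1/(np-p+1))^{1/p}·((n^{q+1}-(n-2)^{q+1})/(q+1))^{1/q}·(max{|f^{(n)}(a)|^q, |f^{(n)}(b)|^q})^{1/q}. -/
open MeasureTheory Set intervalIntegral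

/-!
With `x = t a + (1 - t) b`, repeated integration by parts against the kernels
`t ^ (m - 1) * (m - 2 t)`, whose antiderivatives `t ^ m * (m + 1 - 2 t) / (m + 1)` vanish at `0`,
turns the left-hand side into `(b - a) ^ n / (2 n!) * ∫₀¹ t ^ (n - 1) (n - 2 t) f⁽ⁿ⁾(x) dt`.
Quasi-convexity bounds `|f⁽ⁿ⁾|` on `[a, b]` by `M ^ (1 / q)` with `M` the larger of its values
at the endpoints, and Hölder's inequality for `t ^ (n - 1)` and `n - 2 t` bounds the remaining
integral of the kernel.
-/

section TrapezoidError

variable {a b : ℝ}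

lemma hasDerivAt_convex_comb (t : ℝ) :
    HasDerivAt (fun t : ℝ => t * a + (1 - t) * b) (a - b) t := by
  have h : (fun t : ℝ => t * a + (1 - t) * b) = fun t => t * (a - b) + b := by ext; ring
  simpa [h] using ((hasDerivAt_id t).mul_const (a - b)).add_const b

lemma IntervalIntegrable.comp_convex_comb {g : ℝ → ℝ} (hg : IntervalIntegrable g volume a b) :
    IntervalIntegrable (fun t => g (t * a + (1 - t) * b)) volume 0 1 := by
  rcases eq_or_ne a b with rfl | hab
  · simp only [← add_mul, add_sub_cancel, one_mul]
    exact intervalIntegrable_const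
  have h := (hg.comp_add_right b).comp_mul_left (c := a - b)
  rw [sub_self, zero_div, div_self (sub_ne_zero.mpr hab)] at h
  convert h.symm using 2 with t
  ring_nf

lemma integral_comp_convex_comb (g : ℝ → ℝ) (hab : a ≠ b) :
    ∫ t in (0 : ℝ)..1, g (t * a + (1 - t) * b) = (1 / (b - a)) * ∫ x in a..b, g x := by
  have h := integral_comp_mul_add (a := (0 : ℝ)) (b := 1) g (sub_ne_zero.mpr hab) b
  simp only [mul_zero, zero_add, mul_one, sub_add_cancel, smul_eq_mul] at h
  rw [show (fun t => g (t * a + (1 - t) * b)) = fun t => g ((a - b) * t + b) by ext; ring_nf, h,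
    integral_symm a b, ← neg_sub b a, inv_neg]
  ring

lemma integral_mul_deriv_comp_convex_comb (hab : a ≤ b) {u u' g g' : ℝ → ℝ}
    (hu : ∀ t ∈ Icc (0 : ℝ) 1, HasDerivAt u (u' t) t) (hu' : IntervalIntegrable u' volume 0 1)
    (hg : ∀ x ∈ Icc a b, HasDerivAt g (g' x) x) (hg' : IntervalIntegrable g' volume a b) :
    (a - b) * ∫ t in (0 : ℝ)..1, u t * g' (t * a + (1 - t) * b) =
      u 1 * g a - u 0 * g b - ∫ t in (0 : ℝ)..1, u' t * g (t * a + (1 - t) * b) := by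
  rw [← uIcc_of_le zero_le_one] at hu
  have hv : ∀ t ∈ uIcc (0 : ℝ) 1,
      HasDerivAt (fun t => g (t * a + (1 - t) * b)) (g' (t * a + (1 - t) * b) * (a - b)) t := by
    rw [uIcc_of_le zero_le_one]
    exact fun t ht => (hg _ (convex_Icc a b ⟨le_rfl, hab⟩ ⟨hab, le_rfl⟩ ht.1 (sub_nonneg.2 ht.2)
      (add_sub_cancel _ _))).comp t (hasDerivAt_convex_comb t)
  have h := integral_mul_deriv_eq_deriv_mul hu hv hu'
    (hg'.comp_convex_comb.mul_const (a - b))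
  simp only [one_mul, zero_mul, add_zero, sub_zero, zero_add, sub_self] at h
  rw [← h, ← intervalIntegral.integral_const_mul]
  congr 1 with t
  ring

lemma trapezoid_error_eq_integral {f f' : ℝ → ℝ} (hab : a < b)
    (hf : ∀ x ∈ Icc a b, HasDerivAt f (f' x) x) (hf' : IntervalIntegrable f' volume a b) :
    (f a + f b) / 2 - (1 / (b - a)) * ∫ x in a..b, f x =
      (b - a) / 2 * ∫ t in (0 : ℝ)..1, (1 - 2 * t) * f' (t * a + (1 - t) * b) := by
  have hu : ∀ t ∈ Icc (0 : ℝ) 1, HasDerivAt (fun t : ℝ => 1 - 2 * t) (-2) t := fun t _ => by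
    simpa using ((hasDerivAt_id t).const_mul 2).const_sub 1
  have h := integral_mul_deriv_comp_convex_comb hab.le hu intervalIntegrable_const hf hf'
  rw [intervalIntegral.integral_const_mul, integral_comp_convex_comb f hab.ne] at h
  linear_combination h / 2

lemma integral_kernel_comp_convex_comb {g g' : ℝ → ℝ} (hab : a ≤ b) {m : ℕ} (hm : 1 ≤ m)
    (hg : ∀ x ∈ Icc a b, HasDerivAt g (g' x) x) (hg' : IntervalIntegrable g' volume a b) :
    ∫ t in (0 : ℝ)..1, t ^ (m - 1) * ((m : ℝ) - 2 * t) * g (t * a + (1 - t) * b) =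
      ((m : ℝ) - 1) / ((m : ℝ) + 1) * g a + (b - a) / ((m : ℝ) + 1) *
        ∫ t in (0 : ℝ)..1, t ^ m * (((m : ℝ) + 1) - 2 * t) * g' (t * a + (1 - t) * b) := by
  have hu : ∀ t ∈ Icc (0 : ℝ) 1, HasDerivAt (fun t : ℝ => t ^ m * (((m : ℝ) + 1) - 2 * t))
      (((m : ℝ) + 1) * (t ^ (m - 1) * ((m : ℝ) - 2 * t))) t := fun t _ => by
    refine ((hasDerivAt_pow m t).mul
      (((hasDerivAt_id t).const_mul 2).const_sub ((m : ℝ) + 1))).congr_deriv ?_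
    obtain ⟨j, rfl⟩ : ∃ j, m = j + 1 := ⟨m - 1, by omega⟩
    simp only [Nat.add_sub_cancel, Nat.cast_add, Nat.cast_one, pow_succ, id]
    ring
  have hu' : IntervalIntegrable (fun t : ℝ => ((m : ℝ) + 1) * (t ^ (m - 1) * ((m : ℝ) - 2 * t)))
      volume 0 1 := by
    apply Continuous.intervalIntegrable; fun_prop
  have h := integral_mul_deriv_comp_convex_comb hab hu hu' hg hg'
  simp only [one_pow, one_mul, zero_pow (Nat.one_le_iff_ne_zero.mp hm), zero_mul, sub_zero,
    mul_assoc, intervalIntegral.integral_const_mul] at h ⊢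
  rw [div_mul_eq_mul_div, div_mul_eq_mul_div, ← add_div, eq_div_iff (by positivity)]
  linear_combination h

lemma trapezoid_error_eq_integral_iteratedDeriv {f : ℝ → ℝ} (hab : a < b) {n : ℕ} (hn : 1 ≤ n)
    (hf : ∀ k < n, ∀ t ∈ Icc a b, HasDerivAt (iteratedDeriv k f) (iteratedDeriv (k + 1) f t) t)
    (hint : IntervalIntegrable (iteratedDeriv n f) volume a b) :
    (f a + f b) / 2 - (1 / (b - a)) * (∫ x in a..b, f x) -
      ∑ k ∈ Finset.Icc 2 (n - 1),
        (((k : ℝ) - 1) * (b - a) ^ k / (2 * (Nat.factorial (k + 1) : ℝ))) * iteratedDeriv k f a =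
    (b - a) ^ n / (2 * (Nat.factorial n : ℝ)) * ∫ t in (0 : ℝ)..1,
      t ^ (n - 1) * ((n : ℝ) - 2 * t) * iteratedDeriv n f (t * a + (1 - t) * b) := by
  induction n, hn using Nat.le_induction with
  | base =>
    have h := trapezoid_error_eq_integral (f := f) hab
      (fun t ht => by simpa only [iteratedDeriv_zero] using hf 0 one_pos t ht) hint
    simpa using h
  | succ n hn ih =>
    have hcont : IntervalIntegrable (iteratedDeriv n f) volume a b := by
      refine ContinuousOn.intervalIntegrable ?_
      rw [uIcc_of_le hab.le]
      exact fun t ht => (hf n n.lt_succ_self t ht).continuousAt.continuousWithinAt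
    -- the `k = 1` coefficient vanishes, which covers the step from `n = 1` to `n = 2`
    have hsum : ∀ c : ℕ → ℝ, c 1 = 0 →
        ∑ k ∈ Finset.Icc 2 (n + 1 - 1), c k = ∑ k ∈ Finset.Icc 2 (n - 1), c k + c n := by
      intro c hc1
      obtain ⟨_ | j, rfl⟩ : ∃ j, n = j + 1 := ⟨n - 1, by omega⟩
      · simp [hc1]
      · rw [Nat.add_sub_cancel, Nat.add_sub_cancel, Finset.sum_Icc_succ_top (by omega)]
    rw [hsum _ (by simp), ← sub_sub, ih (fun k hk => hf k (by omega)) hcont,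
      integral_kernel_comp_convex_comb hab.le hn (hf n n.lt_succ_self) hint]
    simp only [Nat.add_sub_cancel, Nat.cast_succ, Nat.factorial_succ, Nat.cast_mul, pow_succ]
    field_simp
    ring

end TrapezoidError

lemma integral_mul_le_rpow_mul_rpow_of_continuousOn {p q : ℝ} (hpq : p.HolderConjugate q)
    {a b : ℝ} (hab : a ≤ b) {φ ψ : ℝ → ℝ} (hφ : ContinuousOn φ (Icc a b))
    (hψ : ContinuousOn ψ (Icc a b)) (hφ0 : ∀ t ∈ Icc a b, 0 ≤ φ t)
    (hψ0 : ∀ t ∈ Icc a b, 0 ≤ ψ t) :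
    ∫ t in a..b, φ t * ψ t ≤
      (∫ t in a..b, φ t ^ p) ^ (1 / p) * (∫ t in a..b, ψ t ^ q) ^ (1 / q) := by
  have memLp : ∀ {g : ℝ → ℝ} (r : ENNReal), ContinuousOn g (Icc a b) →
      MemLp g r (volume.restrict (Icc a b)) := fun r hg => by
    obtain ⟨C, hC⟩ := isCompact_Icc.exists_bound_of_continuousOn hg
    exact MemLp.of_bound (hg.aestronglyMeasurable measurableSet_Icc) C
      ((ae_restrict_iff' measurableSet_Icc).mpr (ae_of_all _ hC))
  simp only [integral_of_le hab, ← integral_Icc_eq_integral_Ioc]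
  exact integral_mul_le_Lp_mul_Lq_of_nonneg hpq
    ((ae_restrict_iff' measurableSet_Icc).mpr (ae_of_all _ hφ0))
    ((ae_restrict_iff' measurableSet_Icc).mpr (ae_of_all _ hψ0)) (memLp _ hφ) (memLp _ hψ)

lemma integral_pow_rpow_eq {n : ℕ} {p : ℝ} (hp : 0 ≤ p) :
    ∫ t in (0 : ℝ)..1, (t ^ n) ^ p = 1 / (n * p + 1) := by
  have h : ∀ t ∈ uIcc (0 : ℝ) 1, (t ^ n) ^ p = t ^ ((n : ℝ) * p) := fun t ht => by
    rw [uIcc_of_le zero_le_one] at ht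
    rw [← Real.rpow_natCast, ← Real.rpow_mul ht.1]
  rw [integral_congr h, integral_rpow (Or.inl (by nlinarith [n.cast_nonneg (α := ℝ)]))]
  simp [Real.zero_rpow (by positivity : (n : ℝ) * p + 1 ≠ 0)]

lemma integral_sub_two_mul_rpow_eq (c : ℝ) {q : ℝ} (hq : 0 < q) :
    ∫ t in (0 : ℝ)..1, (c - 2 * t) ^ q = (c ^ (q + 1) - (c - 2) ^ (q + 1)) / (q + 1) / 2 := by
  rw [integral_comp_sub_mul (fun x => x ^ q) two_ne_zero, mul_zero, sub_zero, mul_one,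
    integral_rpow (Or.inl (by linarith)), smul_eq_mul]
  ring

lemma integral_kernel_le {n : ℕ} (hn : 2 ≤ n) {p q : ℝ} (hpq : p.HolderConjugate q) :
    ∫ t in (0 : ℝ)..1, t ^ (n - 1) * ((n : ℝ) - 2 * t) ≤
      (1 / ((n : ℝ) * p - p + 1)) ^ (1 / p) *
        (((n : ℝ) ^ (q + 1) - ((n : ℝ) - 2) ^ (q + 1)) / (q + 1)) ^ (1 / q) / 2 ^ (1 / q) := by
  have hn2 : (2 : ℝ) ≤ n := by exact_mod_cast hn
  have hkernel := integral_mul_le_rpow_mul_rpow_of_continuousOn hpq zero_le_one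
    (φ := fun t => t ^ (n - 1)) (ψ := fun t => (n : ℝ) - 2 * t) (by fun_prop) (by fun_prop)
    (fun t ht => pow_nonneg ht.1 _) (fun t ht => by linarith [ht.2])
  have hK : 0 ≤ ((n : ℝ) ^ (q + 1) - ((n : ℝ) - 2) ^ (q + 1)) / (q + 1) :=
    div_nonneg (sub_nonneg.mpr (Real.rpow_le_rpow (by linarith) (by linarith)
      (by linarith [hpq.symm.pos]))) (by linarith [hpq.symm.pos])
  rw [integral_pow_rpow_eq hpq.nonneg, integral_sub_two_mul_rpow_eq _ hpq.symm.pos,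
    Real.div_rpow hK zero_le_two, Nat.cast_sub (by omega : 1 ≤ n), Nat.cast_one, sub_mul, one_mul]
    at hkernel
  rwa [mul_div_assoc]

lemma abs_integral_mul_le_mul_integral {w F : ℝ → ℝ} {a b C : ℝ} (hab : a ≤ b)
    (hw : ContinuousOn w (Icc a b)) (hw0 : ∀ t ∈ Icc a b, 0 ≤ w t)
    (hF : IntervalIntegrable F volume a b) (hFC : ∀ t ∈ Icc a b, |F t| ≤ C) :
    |∫ t in a..b, w t * F t| ≤ C * ∫ t in a..b, w t := by
  rw [← intervalIntegral.integral_const_mul]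
  refine (abs_integral_le_integral_abs hab).trans (integral_mono_on hab ?_ ?_ fun t ht => ?_)
  · exact (hF.continuousOn_mul (by rwa [uIcc_of_le hab])).abs
  · exact (hw.intervalIntegrable_of_Icc hab).const_mul C
  · rw [abs_mul, abs_of_nonneg (hw0 t ht), mul_comm]
    exact mul_le_mul_of_nonneg_right (hFC t ht) (hw0 t ht)

theorem stmt_8_general (f : ℝ → ℝ) (a b : ℝ) (hab : a < b) (n : ℕ) (hn : 2 ≤ n)
    (p q : ℝ) (hp : 1 < p) (hpq : 1 / p + 1 / q = 1)
    (hf : ∀ k < n, ∀ t ∈ Set.Icc a b,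
      HasDerivAt (iteratedDeriv k f) (iteratedDeriv (k + 1) f t) t)
    (hint : IntervalIntegrable (iteratedDeriv n f) volume a b)
    (hq : ∀ u ∈ Set.Icc a b, ∀ v ∈ Set.Icc a b, ∀ α ∈ Set.Icc (0 : ℝ) 1,
      |iteratedDeriv n f (α * u + (1 - α) * v)| ^ q ≤
        max (|iteratedDeriv n f u| ^ q) (|iteratedDeriv n f v| ^ q)) :
    |(f a + f b) / 2 - (1 / (b - a)) * (∫ x in a..b, f x) -
      ∑ k ∈ Finset.Icc 2 (n - 1),
        (((k : ℝ) - 1) * (b - a) ^ k / (2 * (Nat.factorial (k + 1) : ℝ))) *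
          iteratedDeriv k f a| ≤
    ((b - a) ^ n / ((2 : ℝ) ^ (1 + 1 / q) * (Nat.factorial n : ℝ))) *
      (1 / ((n : ℝ) * p - p + 1)) ^ (1 / p) *
      (((n : ℝ) ^ (q + 1) - ((n : ℝ) - 2) ^ (q + 1)) / (q + 1)) ^ (1 / q) *
      (max (|iteratedDeriv n f a| ^ q) (|iteratedDeriv n f b| ^ q)) ^ (1 / q) := by
  have hconj : p.HolderConjugate q :=
    Real.holderConjugate_iff.mpr ⟨hp, by simpa only [one_div] using hpq⟩
  set M := max (|iteratedDeriv n f a| ^ q) (|iteratedDeriv n f b| ^ q)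
  have hM : ∀ t ∈ Icc (0 : ℝ) 1, |iteratedDeriv n f (t * a + (1 - t) * b)| ≤ M ^ (1 / q) :=
    fun t ht => by
      rw [one_div, Real.le_rpow_inv_iff_of_pos (abs_nonneg _)
        (le_max_of_le_left (Real.rpow_nonneg (abs_nonneg _) q)) hconj.symm.pos]
      exact hq a ⟨le_rfl, hab.le⟩ b ⟨hab.le, le_rfl⟩ t ht
  have hn2 : (2 : ℝ) ≤ n := by exact_mod_cast hn
  have hbound := abs_integral_mul_le_mul_integral zero_le_one
    (w := fun t => t ^ (n - 1) * ((n : ℝ) - 2 * t)) (by fun_prop)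
    (fun t ht => mul_nonneg (pow_nonneg ht.1 _) (by linarith [ht.2])) hint.comp_convex_comb hM
  rw [trapezoid_error_eq_integral_iteratedDeriv hab (by omega) hf hint, abs_mul,
    abs_of_pos (by have := sub_pos.2 hab; positivity)]
  calc _ ≤ (b - a) ^ n / (2 * n.factorial) *
        (M ^ (1 / q) * ∫ t in (0 : ℝ)..1, t ^ (n - 1) * ((n : ℝ) - 2 * t)) := by
        gcongr
    _ ≤ (b - a) ^ n / (2 * n.factorial) * (M ^ (1 / q) *
        ((1 / ((n : ℝ) * p - p + 1)) ^ (1 / p) *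
          (((n : ℝ) ^ (q + 1) - ((n : ℝ) - 2) ^ (q + 1)) / (q + 1)) ^ (1 / q) / 2 ^ (1 / q))) := by
        have := sub_pos.2 hab
        gcongr
        exact integral_kernel_le hn hconj
    _ = _ := by
        rw [Real.rpow_add two_pos, Real.rpow_one]
        ring

theorem stmt_8 (f : ℝ → ℝ) (a b : ℝ) (hab : a < b) (n : ℕ) (hn : 2 ≤ n)
    (p q : ℝ) (hp : 1 < p) (hq1 : 1 < q) (hpq : 1 / p + 1 / q = 1)
    (hf : ∀ k < n, ∀ t ∈ Set.Icc a b,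
      HasDerivAt (iteratedDeriv k f) (iteratedDeriv (k + 1) f t) t)
    (hint : IntervalIntegrable (iteratedDeriv n f) volume a b)
    (hq : ∀ u ∈ Set.Icc a b, ∀ v ∈ Set.Icc a b, ∀ α ∈ Set.Icc (0 : ℝ) 1,
      |iteratedDeriv n f (α * u + (1 - α) * v)| ^ q ≤
        max (|iteratedDeriv n f u| ^ q) (|iteratedDeriv n f v| ^ q)) :
    |(f a + f b) / 2 - (1 / (b - a)) * (∫ x in a..b, f x) -
      ∑ k ∈ Finset.Icc 2 (n - 1),
        (((k : ℝ) - 1) * (b - a) ^ k / (2 * (Nat.factorial (k + 1) : ℝ))) *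
          iteratedDeriv k f a| ≤
    ((b - a) ^ n / ((2 : ℝ) ^ (1 + 1 / q) * (Nat.factorial n : ℝ))) *
      (1 / ((n : ℝ) * p - p + 1)) ^ (1 / p) *
      (((n : ℝ) ^ (q + 1) - ((n : ℝ) - 2) ^ (q + 1)) / (q + 1)) ^ (1 / q) *
      (max (|iteratedDeriv n f a| ^ q) (|iteratedDeriv n f b| ^ q)) ^ (1 / q) :=
  stmt_8_general f a b hab n hn p q hp hpq hf hint hq
end

section
/- Let f : [a,b] → ℝ be twice differentiable with f'' integrable and |f''| quasi-convex on [a,b] (case n = 2 of the trapezoid-type result). Then |(f(a)+f(b))/2 - (1/(b-a))∫_a^b f(x) dx| ≤ ((b-a)^2/12)·max{|f''(a)|, |f''(b)|}. -/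
open MeasureTheory Set

/-! Integrating by parts twice against the kernel `(x - a) * (b - x)`, which vanishes at both
endpoints, turns the trapezoid error into `(1 / (2 (b - a))) ∫ (x - a) (b - x) f''`.
Quasi-convexity bounds `|f''|` on `[a, b]` by its larger endpoint value, and
`∫ (x - a) (b - x) = (b - a)³ / 6`. -/

theorem le_max_of_quasiconvex {g : ℝ → ℝ} {a b x : ℝ} (hab : a < b) (hx : x ∈ Icc a b)
    (hq : ∀ α ∈ Icc (0 : ℝ) 1, g (α * a + (1 - α) * b) ≤ max (g a) (g b)) :
    g x ≤ max (g a) (g b) := by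
  have hα : (b - x) / (b - a) ∈ Icc (0 : ℝ) 1 := by
    rw [mem_Icc, le_div_iff₀ (by linarith), div_le_one (by linarith)]
    constructor <;> linarith [hx.1, hx.2]
  convert hq _ hα using 2
  field_simp [(sub_pos.2 hab).ne']
  ring

theorem integral_sub_mul_sub (a b : ℝ) :
    ∫ x in a..b, (x - a) * (b - x) = (b - a) ^ 3 / 6 := by
  have hF : ∀ x ∈ uIcc a b, HasDerivAt (fun x => (b - a) * (x - a) ^ 2 / 2 - (x - a) ^ 3 / 3)
      ((x - a) * (b - x)) x := by
    intro x _
    have h := (((hasDerivAt_id' x).sub_const a).fun_pow 2 |>.const_mul (b - a)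
      |>.div_const 2).fun_sub (((hasDerivAt_id' x).sub_const a).fun_pow 3 |>.div_const 3)
    exact h.congr_deriv (by push_cast; ring)
  rw [intervalIntegral.integral_eq_sub_of_hasDerivAt hF
    (Continuous.intervalIntegrable (by fun_prop) _ _)]
  ring

theorem integral_sub_mul_sub_mul_eq_trapezoid {f f' f'' : ℝ → ℝ} {a b : ℝ}
    (hf : ∀ t ∈ uIcc a b, HasDerivAt f (f' t) t)
    (hf' : ∀ t ∈ uIcc a b, HasDerivAt f' (f'' t) t)
    (hint : IntervalIntegrable f'' volume a b) :
    ∫ x in a..b, (x - a) * (b - x) * f'' x = (b - a) * (f a + f b) - 2 * ∫ x in a..b, f x := by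
  have hkernel : ∀ x ∈ uIcc a b, HasDerivAt (fun x => (x - a) * (b - x)) (a + b - 2 * x) x :=
    fun x _ => (((hasDerivAt_id' x).sub_const a).fun_mul
      ((hasDerivAt_id' x).const_sub b)).congr_deriv (by ring)
  have hlinear : ∀ x ∈ uIcc a b, HasDerivAt (fun x => a + b - 2 * x) (-2) x := fun x _ => by
    simpa using ((hasDerivAt_id x).const_mul 2).const_sub (a + b)
  have hint' : IntervalIntegrable f' volume a b :=
    ContinuousOn.intervalIntegrable fun t ht => (hf' t ht).continuousAt.continuousWithinAt
  rw [intervalIntegral.integral_mul_deriv_eq_deriv_mul hkernel hf'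
      (Continuous.intervalIntegrable (by fun_prop) _ _) hint,
    intervalIntegral.integral_mul_deriv_eq_deriv_mul hlinear hf
      (Continuous.intervalIntegrable (by fun_prop) _ _) hint',
    intervalIntegral.integral_const_mul]
  ring

theorem abs_integral_sub_mul_sub_mul_le {g : ℝ → ℝ} {a b M : ℝ} (hab : a ≤ b)
    (hg : IntervalIntegrable g volume a b) (hM : ∀ x ∈ Icc a b, |g x| ≤ M) :
    |∫ x in a..b, (x - a) * (b - x) * g x| ≤ (b - a) ^ 3 / 6 * M := by
  have hkernel : ∀ x ∈ Icc a b, 0 ≤ (x - a) * (b - x) := fun x hx =>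
    mul_nonneg (sub_nonneg.2 hx.1) (sub_nonneg.2 hx.2)
  calc |∫ x in a..b, (x - a) * (b - x) * g x|
      ≤ ∫ x in a..b, |(x - a) * (b - x) * g x| :=
        intervalIntegral.abs_integral_le_integral_abs hab
    _ ≤ ∫ x in a..b, (x - a) * (b - x) * M := by
        refine intervalIntegral.integral_mono_on hab ?_
          (Continuous.intervalIntegrable (by fun_prop) _ _) fun x hx => ?_
        · exact (hg.continuousOn_mul (Continuous.continuousOn (by fun_prop))).abs
        · rw [abs_mul, abs_of_nonneg (hkernel x hx)]
          exact mul_le_mul_of_nonneg_left (hM x hx) (hkernel x hx)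
    _ = (b - a) ^ 3 / 6 * M := by rw [intervalIntegral.integral_mul_const, integral_sub_mul_sub]

theorem stmt_15 (f : ℝ → ℝ) (a b : ℝ) (hab : a < b)
    (hf : ∀ t ∈ Set.Icc a b, HasDerivAt f (deriv f t) t)
    (hf' : ∀ t ∈ Set.Icc a b, HasDerivAt (deriv f) (deriv (deriv f) t) t)
    (hint : IntervalIntegrable (deriv (deriv f)) volume a b)
    (hq : ∀ u ∈ Set.Icc a b, ∀ v ∈ Set.Icc a b, ∀ α ∈ Set.Icc (0 : ℝ) 1,
      |deriv (deriv f) (α * u + (1 - α) * v)| ≤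
        max |deriv (deriv f) u| |deriv (deriv f) v|) :
    |(f a + f b) / 2 - (1 / (b - a)) * ∫ x in a..b, f x| ≤
      ((b - a) ^ 2 / 12) * max |deriv (deriv f) a| |deriv (deriv f) b| := by
  have hIcc : uIcc a b = Icc a b := uIcc_of_le hab.le
  have hba : 0 < b - a := sub_pos.2 hab
  have hbound : ∀ x ∈ Icc a b,
      |deriv (deriv f) x| ≤ max |deriv (deriv f) a| |deriv (deriv f) b| := fun x hx =>
    le_max_of_quasiconvex (g := fun x => |deriv (deriv f) x|) hab hx
      (hq a (left_mem_Icc.2 hab.le) b (right_mem_Icc.2 hab.le))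
  have herror : (f a + f b) / 2 - (1 / (b - a)) * ∫ x in a..b, f x =
      (1 / (2 * (b - a))) * ∫ x in a..b, (x - a) * (b - x) * deriv (deriv f) x := by
    rw [integral_sub_mul_sub_mul_eq_trapezoid (hIcc ▸ hf) (hIcc ▸ hf') hint]
    field_simp
  rw [herror, abs_mul, abs_of_pos (by positivity)]
  calc 1 / (2 * (b - a)) * |∫ x in a..b, (x - a) * (b - x) * deriv (deriv f) x|
      ≤ 1 / (2 * (b - a)) * ((b - a) ^ 3 / 6 * max |deriv (deriv f) a| |deriv (deriv f) b|) :=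
        mul_le_mul_of_nonneg_left (abs_integral_sub_mul_sub_mul_le hab.le hint hbound)
          (by positivity)
    _ = (b - a) ^ 2 / 12 * max |deriv (deriv f) a| |deriv (deriv f) b| := by
        field_simp
        ring
end
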